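/- arXiv:1107.2639 — 3 statements merged into one kernel-verified Lean document; each statement's English description precedes it below -/
import Mathlib

section
/- Let R = (r, s, t, R₁,...,R_r, C₁,...,C_s) be a balanced framework and let n ≥ max{t, r+s}. Then there exists an L-shaped partial latin square P of order n realizing R, i.e., with the upper-left r×s rectangle empty and all other cells filled, such that for each row i ≤ r the set of symbols missing from row i is exactly R_i, and for each column j ≤ s the set of symbols missing from column j is exactly C_j. -/
open scoped Classical

section PLS

variable {n : ℕ}

/-- A partial latin square of order `n`: an `n × n` array of optional symbols,
no symbol occurring twice in any row or column. -/
def IsPLS (n : ℕ) (P : Fin n → Fin n → Option (Fin n)) : Prop :=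
  (∀ i j j' σ, P i j = some σ → P i j' = some σ → j = j') ∧
  (∀ i i' j σ, P i j = some σ → P i' j = some σ → i = i')

/-- `σ` is missing from row `i`. -/
def MissingRow (P : Fin n → Fin n → Option (Fin n)) (σ i : Fin n) : Prop :=
  ∀ j, P i j ≠ some σ

/-- `σ` is missing from column `j`. -/
def MissingCol (P : Fin n → Fin n → Option (Fin n)) (σ j : Fin n) : Prop :=
  ∀ i, P i j ≠ some σ

/-- A cell supports `σ` if it contains `σ`, or is empty and `σ` is missing from
its row and column. -/
def Supports (P : Fin n → Fin n → Option (Fin n)) (σ : Fin n) (c : Fin n × Fin n) : Prop :=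
  P c.1 c.2 = some σ ∨ (P c.1 c.2 = none ∧ MissingRow P σ c.1 ∧ MissingCol P σ c.2)

/-- A set of cells is independent if no two share a row or a column. -/
def IndepCells (S : Finset (Fin n × Fin n)) : Prop :=
  ∀ c ∈ S, ∀ c' ∈ S, c ≠ c' → c.1 ≠ c'.1 ∧ c.2 ≠ c'.2

/-- `alpha P σ T` : max size of an independent subset of `T` all of whose cells support `σ`. -/
noncomputable def alpha (P : Fin n → Fin n → Option (Fin n)) (σ : Fin n)
    (T : Finset (Fin n × Fin n)) : ℕ :=
  (T.powerset.filter (fun S => IndepCells S ∧ ∀ c ∈ S, Supports P σ c)).sup Finset.card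

/-- Hall's Condition: every set of cells satisfies the Hall Inequality. -/
def HallCond (n : ℕ) (P : Fin n → Fin n → Option (Fin n)) : Prop :=
  ∀ T : Finset (Fin n × Fin n), T.card ≤ ∑ σ : Fin n, alpha P σ T

/-- A latin square of order `n`. -/
def IsLatin (n : ℕ) (L : Fin n → Fin n → Fin n) : Prop :=
  (∀ i, Function.Injective (L i)) ∧ (∀ j, Function.Injective fun i => L i j)

/-- `L` is a completion of `P`. -/
def Completes (n : ℕ) (P : Fin n → Fin n → Option (Fin n)) (L : Fin n → Fin n → Fin n) : Prop :=
  IsLatin n L ∧ ∀ i j σ, P i j = some σ → L i j = σ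

end PLS


section AuxLemmas
open Finset



open scoped Classical
open Finset

lemma exists_le_sum {α : Type*} [Fintype α] (c : α → ℕ) (k : ℕ)
    (hk : k ≤ ∑ a, c a) : ∃ v : α → ℕ, (∀ a, v a ≤ c a) ∧ ∑ a, v a = k := by
  induction k with
  | zero => exact ⟨fun _ => 0, fun a => Nat.zero_le _, by simp⟩
  | succ k ih =>
    obtain ⟨v, hv, hsum⟩ := ih (by omega)
    have hex : ∃ a, v a < c a := by
      by_contra h
      push_neg at h
      have : ∑ a, c a ≤ ∑ a, v a := Finset.sum_le_sum (fun a _ => h a)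
      omega
    obtain ⟨a0, ha0⟩ := hex
    refine ⟨Function.update v a0 (v a0 + 1), ?_, ?_⟩
    · intro a
      by_cases h : a = a0
      · subst h; simp only [Function.update_self]; omega
      · simp only [Function.update_of_ne h]; exact hv a
    · have h1 : ∀ a, Function.update v a0 (v a0 + 1) a = v a + (if a = a0 then 1 else 0) := by
        intro a
        by_cases h : a = a0
        · subst h; simp
        · simp [Function.update_of_ne h, h]
      rw [Finset.sum_congr rfl (fun a _ => h1 a), Finset.sum_add_distrib, hsum]
      simp

lemma exists_row_matrix {α : Type*} [Fintype α] :
    ∀ (m k : ℕ) (c : α → ℕ), (∑ a, c a = m * k) →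
    ∃ μ : Fin m → α → ℕ, (∀ p, ∑ a, μ p a = k) ∧ (∀ a, ∑ p, μ p a = c a) := by
  intro m
  induction m with
  | zero =>
    intro k c hc
    refine ⟨Fin.elim0, fun p => p.elim0, fun a => ?_⟩
    have : c a = 0 := Finset.sum_eq_zero_iff.mp (by simpa using hc) a (Finset.mem_univ a)
    simp [this]
  | succ m ih =>
    intro k c hc
    have hck : ∑ a, c a = m * k + k := by rw [hc]; ring
    obtain ⟨v, hv, hvs⟩ := exists_le_sum c k (by omega)
    obtain ⟨μ', h1, h2⟩ := ih k (fun a => c a - v a) (by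
      have h3 : ∑ a, (c a - v a) + ∑ a, v a = ∑ a, c a := by
        rw [← Finset.sum_add_distrib]
        exact Finset.sum_congr rfl (fun a _ => by have := hv a; omega)
      show ∑ a, (c a - v a) = m * k
      omega)
    refine ⟨Fin.cons v μ', ?_, ?_⟩
    · intro p
      refine Fin.cases ?_ ?_ p
      · simpa using hvs
      · intro q; simpa using h1 q
    · intro a
      rw [Fin.sum_univ_succ]
      simp only [Fin.cons_zero, Fin.cons_succ]
      rw [h2 a]
      have := hv a; omega

lemma exists_perm_decomp {α β : Type*} [Fintype α] [Fintype β] [DecidableEq α] [DecidableEq β] :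
    ∀ (k : ℕ) (μ : α → β → ℕ), (∀ a, ∑ b, μ a b = k) → (∀ b, ∑ a, μ a b = k) →
    ∃ f : Fin k → (α ≃ β), ∀ a b, (univ.filter fun p => f p a = b).card = μ a b := by
  intro k
  induction k with
  | zero =>
    intro μ h1 h2
    refine ⟨Fin.elim0, fun a b => ?_⟩
    have hμ : μ a b = 0 := Finset.sum_eq_zero_iff.mp (by simpa using h1 a) b (Finset.mem_univ b)
    simp [hμ, Finset.filter_eq_empty_iff]
  | succ k ih =>
    intro μ h1 h2
    set t : α → Finset β := fun a => univ.filter (fun b => 0 < μ a b) with ht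
    have hall : ∀ S : Finset α, S.card ≤ (S.biUnion t).card := by
      intro S
      have key : (k + 1) * S.card ≤ (k + 1) * (S.biUnion t).card := by
        calc (k + 1) * S.card = ∑ a ∈ S, (k + 1) := by
              rw [Finset.sum_const, smul_eq_mul, mul_comm]
          _ = ∑ a ∈ S, ∑ b ∈ t a, μ a b := by
              refine Finset.sum_congr rfl (fun a _ => ?_)
              rw [← h1 a]
              exact (Finset.sum_filter_of_ne (fun b _ h => by positivity)).symm |>.trans rfl
          _ ≤ ∑ a ∈ S, ∑ b ∈ S.biUnion t, μ a b := by
              refine Finset.sum_le_sum (fun a ha => ?_)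
              exact Finset.sum_le_sum_of_subset (fun b hb => Finset.mem_biUnion.mpr ⟨a, ha, hb⟩)
          _ = ∑ b ∈ S.biUnion t, ∑ a ∈ S, μ a b := Finset.sum_comm
          _ ≤ ∑ b ∈ S.biUnion t, (k + 1) := by
              refine Finset.sum_le_sum (fun b _ => ?_)
              rw [← h2 b]
              exact Finset.sum_le_sum_of_subset (Finset.subset_univ S)
          _ = (k + 1) * (S.biUnion t).card := by
              rw [Finset.sum_const, smul_eq_mul, mul_comm]
      exact Nat.le_of_mul_le_mul_left key (Nat.succ_pos k)
    obtain ⟨φ, hinj, hmem⟩ := (Finset.all_card_le_biUnion_card_iff_exists_injective t).mp hall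
    have hcard : Fintype.card α = Fintype.card β := by
      have hA : (k + 1) * Fintype.card α = ∑ a : α, ∑ b : β, μ a b := by
        rw [Finset.sum_congr rfl (fun a _ => h1 a), Finset.sum_const, smul_eq_mul,
          Finset.card_univ, mul_comm]
      have hB : (k + 1) * Fintype.card β = ∑ a : α, ∑ b : β, μ a b := by
        rw [Finset.sum_comm]
        rw [Finset.sum_congr rfl (fun b _ => h2 b), Finset.sum_const, smul_eq_mul,
          Finset.card_univ, mul_comm]
      have := hA.trans hB.symm
      exact Nat.eq_of_mul_eq_mul_left (Nat.succ_pos k) this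
    have hbij : Function.Bijective φ :=
      (Fintype.bijective_iff_injective_and_card φ).mpr ⟨hinj, hcard⟩
    set e : α ≃ β := Equiv.ofBijective φ hbij with he
    have hpos : ∀ a, 0 < μ a (φ a) := fun a => (Finset.mem_filter.mp (hmem a)).2
    set μ' : α → β → ℕ := fun a b => μ a b - (if φ a = b then 1 else 0) with hμ'
    have hind : ∀ a b, μ a b = μ' a b + (if φ a = b then 1 else 0) := by
      intro a b
      by_cases h : φ a = b
      · have := hpos a; rw [h] at this; simp [hμ', h]; omega
      · simp [hμ', h]
    have h1' : ∀ a, ∑ b, μ' a b = k := by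
      intro a
      have : ∑ b, μ a b = ∑ b, μ' a b + ∑ b, (if φ a = b then 1 else 0) := by
        rw [← Finset.sum_add_distrib]
        exact Finset.sum_congr rfl (fun b _ => hind a b)
      have hone : ∑ b, (if φ a = b then 1 else 0) = 1 := by
        simp
      have := h1 a
      omega
    have h2' : ∀ b, ∑ a, μ' a b = k := by
      intro b
      have hsum : ∑ a, μ a b = ∑ a, μ' a b + ∑ a, (if φ a = b then 1 else 0) := by
        rw [← Finset.sum_add_distrib]
        exact Finset.sum_congr rfl (fun a _ => hind a b)
      have hone : ∑ a, (if φ a = b then 1 else 0) = 1 := by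
        have : ∀ a, (φ a = b) ↔ (a = e.symm b) := fun a => by
          rw [show φ a = e a from rfl, Equiv.apply_eq_iff_eq_symm_apply]
        rw [Finset.sum_congr rfl (fun a _ => by rw [if_congr (this a) rfl rfl])]
        simp
      have := h2 b
      omega
    obtain ⟨f', hf'⟩ := ih μ' h1' h2'
    refine ⟨Fin.cons e f', fun a b => ?_⟩
    have hcf : (univ.filter fun p : Fin (k+1) => (Fin.cons e f' : Fin (k+1) → α ≃ β) p a = b).card
        = (if e a = b then 1 else 0) + (univ.filter fun p : Fin k => f' p a = b).card := by
      rw [Finset.card_filter, Fin.sum_univ_succ]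
      simp only [Fin.cons_zero, Fin.cons_succ]
      rw [Finset.card_filter]
    rw [hcf, hf']
    have hea : e a = φ a := rfl
    rw [hea]
    by_cases h : φ a = b
    · have := hpos a; rw [h] at this; simp [hμ', h]; omega
    · simp [hμ', h]

lemma sum_ite_compl {β : Type*} [Fintype β] (p : β → Prop) [DecidablePred p] :
    ∑ b, (if p b then (0:ℕ) else 1) + ∑ b, (if p b then 1 else 0) = Fintype.card β := by
  rw [← Finset.sum_add_distrib]
  have h : ∀ b, (if p b then (0:ℕ) else 1) + (if p b then 1 else 0) = 1 := fun b => by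
    by_cases h : p b <;> simp [h]
  rw [Finset.sum_congr rfl (fun b _ => h b)]
  simp


end AuxLemmas

theorem stmt12 (r s t n : ℕ) (hr : 0 < r) (hs : 0 < s) (ht : 0 < t)
    (R : Fin r → Finset (Fin t)) (C : Fin s → Finset (Fin t))
    (hbal1 : ∀ i, (R i).card = s) (hbal2 : ∀ j, (C j).card = r)
    (hbal3 : ∀ σ : Fin t, (Finset.univ.filter (fun i => σ ∈ R i)).card
        = (Finset.univ.filter (fun j => σ ∈ C j)).card)
    (hn1 : t ≤ n) (hn2 : r + s ≤ n) :
    ∃ P : Fin n → Fin n → Option (Fin n), IsPLS n P ∧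
      (∀ i j : Fin n, P i j = none ↔ (i.val < r ∧ j.val < s)) ∧
      (∀ (i : Fin n) (hi : i.val < r),
        Finset.univ.filter (fun σ => MissingRow P σ i)
          = (R ⟨i.val, hi⟩).image (Fin.castLE hn1)) ∧
      (∀ (j : Fin n) (hj : j.val < s),
        Finset.univ.filter (fun σ => MissingCol P σ j)
          = (C ⟨j.val, hj⟩).image (Fin.castLE hn1)) := by

  classical
  have hrn : r < n := by omega
  have hsn : s < n := by omega
  obtain ⟨q, hq⟩ : ∃ q, n = r + s + q := ⟨n - (r + s), by omega⟩
  set emb : Fin t → Fin n := Fin.castLE hn1 with hemb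
  have hembinj : Function.Injective emb := Fin.castLE_injective hn1
  set R' : Fin r → Finset (Fin n) := fun i => (R i).image emb with hR'
  set C' : Fin s → Finset (Fin n) := fun j => (C j).image emb with hC'
  have hR'card : ∀ i, (R' i).card = s := fun i => by
    rw [hR']; rw [Finset.card_image_of_injective _ hembinj]; exact hbal1 i
  have hC'card : ∀ j, (C' j).card = r := fun j => by
    rw [hC']; rw [Finset.card_image_of_injective _ hembinj]; exact hbal2 j
  set dC : Fin n → ℕ := fun σ => ∑ j : Fin s, (if σ ∈ C' j then 1 else 0) with hdC
  set dR : Fin n → ℕ := fun σ => ∑ i : Fin r, (if σ ∈ R' i then 1 else 0) with hdR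
  have hdCeq : ∀ σ, dC σ = ∑ j : Fin s, (if σ ∈ C' j then 1 else 0) := fun σ => rfl
  have hdReq : ∀ σ, dR σ = ∑ i : Fin r, (if σ ∈ R' i then 1 else 0) := fun σ => rfl
  have hdCle : ∀ σ, dC σ ≤ s := by
    intro σ
    have h1 := sum_ite_compl (fun j : Fin s => σ ∈ C' j)
    simp only [Fintype.card_fin] at h1
    have h2 := hdCeq σ
    omega
  have hdRle : ∀ σ, dR σ ≤ r := by
    intro σ
    have h1 := sum_ite_compl (fun i : Fin r => σ ∈ R' i)
    simp only [Fintype.card_fin] at h1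
    have h2 := hdReq σ
    omega
  have hdRC : ∀ σ, dR σ = dC σ := by
    intro σ
    by_cases hσ : (σ : ℕ) < t
    · have hembτ : emb ⟨(σ : ℕ), hσ⟩ = σ := by
        apply Fin.ext; rfl
      have hmemR : ∀ i, (σ ∈ R' i) ↔ (⟨(σ : ℕ), hσ⟩ : Fin t) ∈ R i := by
        intro i
        rw [hR']
        constructor
        · intro h
          obtain ⟨x, hx, hxe⟩ := Finset.mem_image.mp h
          have : x = ⟨(σ : ℕ), hσ⟩ := hembinj (hxe.trans hembτ.symm)
          rwa [this] at hx
        · intro h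
          exact Finset.mem_image.mpr ⟨_, h, hembτ⟩
      have hmemC : ∀ j, (σ ∈ C' j) ↔ (⟨(σ : ℕ), hσ⟩ : Fin t) ∈ C j := by
        intro j
        rw [hC']
        constructor
        · intro h
          obtain ⟨x, hx, hxe⟩ := Finset.mem_image.mp h
          have : x = ⟨(σ : ℕ), hσ⟩ := hembinj (hxe.trans hembτ.symm)
          rwa [this] at hx
        · intro h
          exact Finset.mem_image.mpr ⟨_, h, hembτ⟩
      rw [hdReq, hdCeq]
      have e1 : ∑ i : Fin r, (if σ ∈ R' i then (1:ℕ) else 0)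
          = (Finset.univ.filter (fun i => (⟨(σ : ℕ), hσ⟩ : Fin t) ∈ R i)).card := by
        rw [Finset.card_filter]
        exact Finset.sum_congr rfl (fun i _ => by rw [if_congr (hmemR i) rfl rfl])
      have e2 : ∑ j : Fin s, (if σ ∈ C' j then (1:ℕ) else 0)
          = (Finset.univ.filter (fun j => (⟨(σ : ℕ), hσ⟩ : Fin t) ∈ C j)).card := by
        rw [Finset.card_filter]
        exact Finset.sum_congr rfl (fun j _ => by rw [if_congr (hmemC j) rfl rfl])
      rw [e1, e2]
      exact hbal3 _
    · have hnR : ∀ i, σ ∉ R' i := by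
        intro i h
        obtain ⟨x, _, hxe⟩ := Finset.mem_image.mp h
        have : (x : ℕ) = (σ : ℕ) := congrArg Fin.val hxe
        omega
      have hnC : ∀ j, σ ∉ C' j := by
        intro j h
        obtain ⟨x, _, hxe⟩ := Finset.mem_image.mp h
        have : (x : ℕ) = (σ : ℕ) := congrArg Fin.val hxe
        omega
      rw [hdReq, hdCeq]
      rw [Finset.sum_congr rfl (fun i _ => if_neg (hnR i)),
        Finset.sum_congr rfl (fun j _ => if_neg (hnC j))]
      simp
  have hsumdC : ∑ σ, dC σ = r * s := by
    rw [Finset.sum_congr rfl (fun σ _ => hdCeq σ)]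
    rw [Finset.sum_comm]
    have : ∀ j : Fin s, ∑ σ : Fin n, (if σ ∈ C' j then (1:ℕ) else 0) = r := by
      intro j
      rw [← Finset.card_filter]
      have : Finset.univ.filter (fun σ => σ ∈ C' j) = C' j := by
        ext σ; simp
      rw [this, hC'card]
    rw [Finset.sum_congr rfl (fun j _ => this j)]
    simp [mul_comm]
  -- padding matrix
  have hpadsum : ∑ σ : Fin n, (q + dC σ) = (n - s) * (n - r) := by
    rw [Finset.sum_add_distrib, Finset.sum_const, hsumdC]
    simp only [Finset.card_univ, Fintype.card_fin, smul_eq_mul]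
    have e1 : n - s = r + q := by omega
    have e2 : n - r = s + q := by omega
    rw [e1, e2, hq]; ring
  obtain ⟨μpad, hpadrow, hpadcol⟩ := exists_row_matrix (n - s) (n - r)
    (fun σ => q + dC σ) hpadsum
  -- the column-symbol matrix
  set μ1 : (Fin s ⊕ Fin (n - s)) → Fin n → ℕ :=
    Sum.elim (fun j σ => if σ ∈ C' j then 0 else 1) (fun p σ => μpad p σ) with hμ1
  have hμ1inl : ∀ (j : Fin s) σ, μ1 (Sum.inl j) σ = (if σ ∈ C' j then 0 else 1) := fun j σ => rfl
  have hμ1inr : ∀ (p : Fin (n - s)) σ, μ1 (Sum.inr p) σ = μpad p σ := fun p σ => rfl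
  have hμ1row : ∀ x, ∑ σ, μ1 x σ = n - r := by
    rintro (j | p)
    · rw [Finset.sum_congr rfl (fun σ _ => hμ1inl j σ)]
      have h1 := sum_ite_compl (fun σ : Fin n => σ ∈ C' j)
      simp only [Fintype.card_fin] at h1
      have h2 : ∑ σ : Fin n, (if σ ∈ C' j then (1:ℕ) else 0) = r := by
        rw [← Finset.card_filter]
        have : Finset.univ.filter (fun σ => σ ∈ C' j) = C' j := by ext σ; simp
        rw [this, hC'card]
      omega
    · rw [Finset.sum_congr rfl (fun σ _ => hμ1inr p σ)]
      exact hpadrow p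
  have hμ1col : ∀ σ, ∑ x, μ1 x σ = n - r := by
    intro σ
    rw [Fintype.sum_sum_type]
    rw [Finset.sum_congr rfl (fun j _ => hμ1inl j σ),
      Finset.sum_congr rfl (fun p _ => hμ1inr p σ)]
    rw [hpadcol σ]
    have h1 := sum_ite_compl (fun j : Fin s => σ ∈ C' j)
    simp only [Fintype.card_fin] at h1
    have h2 := hdCeq σ
    have h3 := hdCle σ
    omega
  obtain ⟨g, hg⟩ := exists_perm_decomp (n - r) μ1 hμ1row hμ1col
  -- no symbol of C' j appears in column j
  have hgC : ∀ (p : Fin (n - r)) (j : Fin s), g p (Sum.inl j) ∉ C' j := by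
    intro p j hmem
    have h0 := hg (Sum.inl j) (g p (Sum.inl j))
    rw [hμ1inl, if_pos hmem] at h0
    have : p ∈ Finset.univ.filter (fun p' => g p' (Sum.inl j) = g p (Sum.inl j)) :=
      Finset.mem_filter.mpr ⟨Finset.mem_univ p, rfl⟩
    rw [Finset.card_eq_zero] at h0
    rw [h0] at this
    exact absurd this (Finset.notMem_empty p)
  -- uniqueness within a left column
  have hguniq : ∀ (j : Fin s) σ (p p' : Fin (n - r)),
      g p (Sum.inl j) = σ → g p' (Sum.inl j) = σ → p = p' := by
    intro j σ p p' hp hp'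
    have h0 := hg (Sum.inl j) σ
    rw [hμ1inl] at h0
    have hle : (Finset.univ.filter (fun p'' => g p'' (Sum.inl j) = σ)).card ≤ 1 := by
      rw [h0]; split <;> omega
    exact Finset.card_le_one.mp hle p
      (Finset.mem_filter.mpr ⟨Finset.mem_univ _, hp⟩) p'
      (Finset.mem_filter.mpr ⟨Finset.mem_univ _, hp'⟩)
  -- row sets of the left block
  set rowC : Fin (n - r) → Finset (Fin n) :=
    fun p => Finset.univ.image (fun j : Fin s => g p (Sum.inl j)) with hrowC
  have hrowCcard : ∀ p, (rowC p).card = s := by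
    intro p
    rw [hrowC]
    rw [Finset.card_image_of_injective _
      (fun a b hab => Sum.inl_injective ((g p).injective hab))]
    simp
  have hcollapse : ∀ (p : Fin (n - r)) (σ : Fin n),
      ∑ j : Fin s, (if g p (Sum.inl j) = σ then (1:ℕ) else 0)
        = (if σ ∈ rowC p then 1 else 0) := by
    intro p σ
    by_cases h : σ ∈ rowC p
    · rw [if_pos h]
      obtain ⟨j0, -, hj0⟩ := Finset.mem_image.mp h
      rw [Finset.sum_eq_single j0]
      · rw [if_pos hj0]
      · intro j _ hne
        rw [if_neg]
        intro he
        exact hne (Sum.inl_injective ((g p).injective (he.trans hj0.symm)))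
      · intro h'; exact absurd (Finset.mem_univ j0) h'
    · rw [if_neg h]
      apply Finset.sum_eq_zero
      intro j _
      rw [if_neg]
      intro he
      exact h (Finset.mem_image.mpr ⟨j, Finset.mem_univ j, he⟩)
  have hcnt : ∀ σ, ∑ p : Fin (n - r), (if σ ∈ rowC p then (1:ℕ) else 0) = s - dC σ := by
    intro σ
    rw [Finset.sum_congr rfl (fun p _ => (hcollapse p σ).symm)]
    rw [Finset.sum_comm]
    have hInner : ∀ j : Fin s, ∑ p : Fin (n - r), (if g p (Sum.inl j) = σ then (1:ℕ) else 0)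
        = (if σ ∈ C' j then 0 else 1) := by
      intro j
      rw [← Finset.card_filter]
      rw [hg (Sum.inl j) σ, hμ1inl]
    rw [Finset.sum_congr rfl (fun j _ => hInner j)]
    have h1 := sum_ite_compl (fun j : Fin s => σ ∈ C' j)
    simp only [Fintype.card_fin] at h1
    have h2 := hdCeq σ
    omega
  -- the row-set function for all rows
  set rowSet : (Fin r ⊕ Fin (n - r)) → Finset (Fin n) := Sum.elim R' rowC with hrowSet
  have hrowSetinl : ∀ i : Fin r, rowSet (Sum.inl i) = R' i := fun i => rfl
  have hrowSetinr : ∀ p, rowSet (Sum.inr p) = rowC p := fun p => rfl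
  set μ2 : (Fin r ⊕ Fin (n - r)) → Fin n → ℕ :=
    fun x σ => if σ ∈ rowSet x then 0 else 1 with hμ2
  have hμ2eq : ∀ x σ, μ2 x σ = if σ ∈ rowSet x then 0 else 1 := fun x σ => rfl
  have hμ2row : ∀ x, ∑ σ, μ2 x σ = n - s := by
    intro x
    rw [Finset.sum_congr rfl (fun σ _ => hμ2eq x σ)]
    have h1 := sum_ite_compl (fun σ : Fin n => σ ∈ rowSet x)
    simp only [Fintype.card_fin] at h1
    have h2 : ∑ σ : Fin n, (if σ ∈ rowSet x then (1:ℕ) else 0) = s := by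
      rw [← Finset.card_filter]
      have he : Finset.univ.filter (fun σ => σ ∈ rowSet x) = rowSet x := by ext σ; simp
      rw [he]
      cases x with
      | inl i => rw [hrowSetinl, hR'card]
      | inr p => rw [hrowSetinr, hrowCcard]
    omega
  have hμ2col : ∀ σ, ∑ x, μ2 x σ = n - s := by
    intro σ
    rw [Fintype.sum_sum_type]
    have hA : ∑ i : Fin r, μ2 (Sum.inl i) σ = r - dR σ := by
      have h3 : ∀ i : Fin r, μ2 (Sum.inl i) σ = (if σ ∈ R' i then 0 else 1) := fun i => rfl
      rw [Finset.sum_congr rfl (fun i _ => h3 i)]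
      have h1 := sum_ite_compl (fun i : Fin r => σ ∈ R' i)
      simp only [Fintype.card_fin] at h1
      have h2 := hdReq σ
      omega
    have hB : ∑ p : Fin (n - r), μ2 (Sum.inr p) σ = (n - r) - (s - dC σ) := by
      have h3 : ∀ p, μ2 (Sum.inr p) σ = (if σ ∈ rowC p then 0 else 1) := fun p => rfl
      rw [Finset.sum_congr rfl (fun p _ => h3 p)]
      have h1 := sum_ite_compl (fun p : Fin (n - r) => σ ∈ rowC p)
      simp only [Fintype.card_fin] at h1
      have h2 := hcnt σ
      omega
    rw [hA, hB]
    have e1 := hdRC σ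
    have e2 := hdCle σ
    have e3 := hdRle σ
    omega
  obtain ⟨f, hf⟩ := exists_perm_decomp (n - s) μ2 hμ2row hμ2col
  have hfuniq : ∀ x σ (c c' : Fin (n - s)), f c x = σ → f c' x = σ → c = c' := by
    intro x σ c c' hc hc'
    have h0 := hf x σ
    have hle : (Finset.univ.filter (fun c'' => f c'' x = σ)).card ≤ 1 := by
      rw [h0, hμ2eq]; split <;> omega
    exact Finset.card_le_one.mp hle c
      (Finset.mem_filter.mpr ⟨Finset.mem_univ _, hc⟩) c'
      (Finset.mem_filter.mpr ⟨Finset.mem_univ _, hc'⟩)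
  have hfnot : ∀ (c : Fin (n - s)) x, f c x ∉ rowSet x := by
    intro c x hmem
    have h0 := hf x (f c x)
    rw [hμ2eq, if_pos hmem] at h0
    rw [Finset.card_eq_zero] at h0
    have hin : c ∈ Finset.univ.filter (fun c' => f c' x = f c x) :=
      Finset.mem_filter.mpr ⟨Finset.mem_univ c, rfl⟩
    rw [h0] at hin
    exact absurd hin (Finset.notMem_empty c)
  have hfex : ∀ x σ, σ ∉ rowSet x → ∃ c, f c x = σ := by
    intro x σ hmem
    have h0 := hf x σ
    rw [hμ2eq, if_neg hmem] at h0
    have hne : (Finset.univ.filter (fun c => f c x = σ)).Nonempty := by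
      rw [← Finset.card_pos, h0]; omega
    obtain ⟨c, hc⟩ := hne
    exact ⟨c, (Finset.mem_filter.mp hc).2⟩
  have hgex : ∀ (j : Fin s) σ, σ ∉ C' j → ∃ p, g p (Sum.inl j) = σ := by
    intro j σ hmem
    have h0 := hg (Sum.inl j) σ
    rw [hμ1inl, if_neg hmem] at h0
    have hne : (Finset.univ.filter (fun p => g p (Sum.inl j) = σ)).Nonempty := by
      rw [← Finset.card_pos, h0]; omega
    obtain ⟨p, hp⟩ := hne
    exact ⟨p, (Finset.mem_filter.mp hp).2⟩
  -- the partial latin square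
  have hsub1 : ∀ i : Fin n, (i:ℕ) - r < n - r := fun i => by have := i.isLt; omega
  have hsub2 : ∀ j : Fin n, (j:ℕ) - s < n - s := fun j => by have := j.isLt; omega
  set toRow : Fin n → (Fin r ⊕ Fin (n - r)) := fun i =>
    if h : (i:ℕ) < r then Sum.inl ⟨(i:ℕ), h⟩ else Sum.inr ⟨(i:ℕ) - r, hsub1 i⟩ with htoRow
  have htoRowlt : ∀ (i : Fin n) (h : (i:ℕ) < r), toRow i = Sum.inl ⟨(i:ℕ), h⟩ := by
    intro i h; simp only [htoRow]; rw [dif_pos h]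
  have htoRowge : ∀ (i : Fin n) (h : ¬ (i:ℕ) < r), toRow i = Sum.inr ⟨(i:ℕ) - r, hsub1 i⟩ := by
    intro i h; simp only [htoRow]; rw [dif_neg h]
  have htoRowinj : Function.Injective toRow := by
    intro a b hab
    by_cases ha : (a:ℕ) < r <;> by_cases hb : (b:ℕ) < r
    · rw [htoRowlt a ha, htoRowlt b hb] at hab
      have := congrArg Fin.val (Sum.inl_injective hab)
      exact Fin.ext this
    · rw [htoRowlt a ha, htoRowge b hb] at hab
      exact absurd hab (by simp)
    · rw [htoRowge a ha, htoRowlt b hb] at hab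
      exact absurd hab (by simp)
    · rw [htoRowge a ha, htoRowge b hb] at hab
      have := congrArg Fin.val (Sum.inr_injective hab)
      simp only at this
      exact Fin.ext (by omega)
  set P : Fin n → Fin n → Option (Fin n) := fun i j =>
    if hj : (j:ℕ) < s then
      (if hi : (i:ℕ) < r then none
       else some (g ⟨(i:ℕ) - r, hsub1 i⟩ (Sum.inl ⟨(j:ℕ), hj⟩)))
    else some (f ⟨(j:ℕ) - s, hsub2 j⟩ (toRow i)) with hP
  have hP1 : ∀ (i j : Fin n), (i:ℕ) < r → (j:ℕ) < s → P i j = none := by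
    intro i j hi hj; simp only [hP]; rw [dif_pos hj, dif_pos hi]
  have hP2 : ∀ (i j : Fin n) (hi : ¬(i:ℕ) < r) (hj : (j:ℕ) < s),
      P i j = some (g ⟨(i:ℕ) - r, hsub1 i⟩ (Sum.inl ⟨(j:ℕ), hj⟩)) := by
    intro i j hi hj; simp only [hP]; rw [dif_pos hj, dif_neg hi]
  have hP3 : ∀ (i j : Fin n) (hj : ¬(j:ℕ) < s),
      P i j = some (f ⟨(j:ℕ) - s, hsub2 j⟩ (toRow i)) := by
    intro i j hj; simp only [hP]; rw [dif_neg hj]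
  refine ⟨P, ⟨?_, ?_⟩, ?_, ?_, ?_⟩
  · -- no symbol twice in a row
    intro i j j' σ hj hj'
    by_cases h1 : (j:ℕ) < s <;> by_cases h2 : (j':ℕ) < s
    · by_cases hi : (i:ℕ) < r
      · rw [hP1 i j hi h1] at hj; exact absurd hj (by simp)
      · rw [hP2 i j hi h1] at hj
        rw [hP2 i j' hi h2] at hj'
        have e1 := Option.some.inj hj
        have e2 := Option.some.inj hj'
        have e3 := Sum.inl_injective ((g _).injective (e1.trans e2.symm))
        exact Fin.ext (Fin.mk.inj e3)
    · by_cases hi : (i:ℕ) < r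
      · rw [hP1 i j hi h1] at hj; exact absurd hj (by simp)
      · rw [hP2 i j hi h1] at hj
        rw [hP3 i j' h2] at hj'
        have e1 := Option.some.inj hj
        have e2 := Option.some.inj hj'
        have hmem : σ ∈ rowSet (toRow i) := by
          rw [htoRowge i hi, hrowSetinr]
          exact Finset.mem_image.mpr ⟨⟨(j:ℕ), h1⟩, Finset.mem_univ _, e1⟩
        exact absurd hmem (by rw [← e2]; exact hfnot _ _)
    · by_cases hi : (i:ℕ) < r
      · rw [hP1 i j' hi h2] at hj'; exact absurd hj' (by simp)
      · rw [hP2 i j' hi h2] at hj'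
        rw [hP3 i j h1] at hj
        have e1 := Option.some.inj hj'
        have e2 := Option.some.inj hj
        have hmem : σ ∈ rowSet (toRow i) := by
          rw [htoRowge i hi, hrowSetinr]
          exact Finset.mem_image.mpr ⟨⟨(j':ℕ), h2⟩, Finset.mem_univ _, e1⟩
        exact absurd hmem (by rw [← e2]; exact hfnot _ _)
    · rw [hP3 i j h1] at hj
      rw [hP3 i j' h2] at hj'
      have e := hfuniq (toRow i) σ _ _ (Option.some.inj hj) (Option.some.inj hj')
      have := congrArg Fin.val e
      simp only at this
      exact Fin.ext (by omega)
  · -- no symbol twice in a column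
    intro i i' j σ hj hj'
    by_cases h1 : (j:ℕ) < s
    · by_cases hi : (i:ℕ) < r
      · rw [hP1 i j hi h1] at hj; exact absurd hj (by simp)
      · by_cases hi' : (i':ℕ) < r
        · rw [hP1 i' j hi' h1] at hj'; exact absurd hj' (by simp)
        · rw [hP2 i j hi h1] at hj
          rw [hP2 i' j hi' h1] at hj'
          have e := hguniq ⟨(j:ℕ), h1⟩ σ _ _ (Option.some.inj hj) (Option.some.inj hj')
          have := congrArg Fin.val e
          simp only at this
          exact Fin.ext (by omega)
    · rw [hP3 i j h1] at hj
      rw [hP3 i' j h1] at hj'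
      have e : toRow i = toRow i' :=
        (f _).injective ((Option.some.inj hj).trans (Option.some.inj hj').symm)
      exact htoRowinj e
  · -- empty exactly on the corner
    intro i j
    constructor
    · intro h
      by_cases h1 : (j:ℕ) < s
      · by_cases hi : (i:ℕ) < r
        · exact ⟨hi, h1⟩
        · rw [hP2 i j hi h1] at h; exact absurd h (by simp)
      · rw [hP3 i j h1] at h; exact absurd h (by simp)
    · rintro ⟨hi, hjs⟩; exact hP1 i j hi hjs
  · -- missing symbols of the first r rows
    intro i hi
    apply Finset.ext
    intro σ
    rw [Finset.mem_filter]
    constructor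
    · rintro ⟨-, hmiss⟩
      by_contra hnot
      have hnot' : σ ∉ rowSet (toRow i) := by
        rw [htoRowlt i hi, hrowSetinl]
        exact hnot
      obtain ⟨c, hc⟩ := hfex (toRow i) σ hnot'
      have hjc : s + (c:ℕ) < n := by have := c.isLt; omega
      have hPv : P i ⟨s + (c:ℕ), hjc⟩ = some σ := by
        rw [hP3 i ⟨s + (c:ℕ), hjc⟩ (by show ¬ s + (c:ℕ) < s; omega)]
        have e : (⟨((⟨s + (c:ℕ), hjc⟩ : Fin n):ℕ) - s, hsub2 _⟩ : Fin (n - s)) = c :=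
          Fin.ext (by show s + (c:ℕ) - s = (c:ℕ); omega)
        rw [e, hc]
      exact absurd hPv (hmiss _)
    · intro hmem
      refine ⟨Finset.mem_univ σ, ?_⟩
      intro j hPj
      by_cases h1 : (j:ℕ) < s
      · rw [hP1 i j hi h1] at hPj; exact absurd hPj (by simp)
      · rw [hP3 i j h1] at hPj
        have heq := Option.some.inj hPj
        have hmem' : σ ∈ rowSet (toRow i) := by
          rw [htoRowlt i hi, hrowSetinl]
          exact hmem
        exact hfnot _ _ (by rw [heq]; exact hmem')
  · -- missing symbols of the first s columns
    intro j hj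
    apply Finset.ext
    intro σ
    rw [Finset.mem_filter]
    constructor
    · rintro ⟨-, hmiss⟩
      by_contra hnot
      have hnot' : σ ∉ C' ⟨(j:ℕ), hj⟩ := hnot
      obtain ⟨p, hp⟩ := hgex ⟨(j:ℕ), hj⟩ σ hnot'
      have hip : r + (p:ℕ) < n := by have := p.isLt; omega
      have hPv : P ⟨r + (p:ℕ), hip⟩ j = some σ := by
        rw [hP2 ⟨r + (p:ℕ), hip⟩ j (by show ¬ r + (p:ℕ) < r; omega) hj]
        have e : (⟨((⟨r + (p:ℕ), hip⟩ : Fin n):ℕ) - r, hsub1 _⟩ : Fin (n - r)) = p :=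
          Fin.ext (by show r + (p:ℕ) - r = (p:ℕ); omega)
        rw [e, hp]
      exact absurd hPv (hmiss _)
    · intro hmem
      refine ⟨Finset.mem_univ σ, ?_⟩
      intro i hPj
      by_cases hi : (i:ℕ) < r
      · rw [hP1 i j hi hj] at hPj; exact absurd hPj (by simp)
      · rw [hP2 i j hi hj] at hPj
        exact hgC ⟨(i:ℕ) - r, hsub1 i⟩ ⟨(j:ℕ), hj⟩
          (by rw [Option.some.inj hPj]; exact hmem)
end

section
/- Let P be a partial latin square of order n whose filled cells all lie in the upper-left r×s rectangle R, with at most one empty cell of R per column, and suppose the Hall Inequality holds for the set H of cells in the top r rows. Then for every symbol σ, ν(σ) + ρ(σ) + n − s ≥ r, where ν(σ) is the number of occurrences of σ in R and ρ(σ) is the number of rows containing an empty cell of R supporting σ. -/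
open scoped Classical

/-!
Independent cells of the top `r` rows lie in distinct rows, so `α(τ, H) ≤ r` for every symbol `τ`,
and the Hall Inequality `r * n ≤ ∑ τ, α(τ, H)` then forces `α(σ, H) = r` for every `σ`. On the
other hand an independent set of `σ`-supporting cells of `H` consists of cells containing `σ`, empty
cells of the rectangle (in distinct rows, hence counted by `ρ σ`) and cells outside the first `s`
columns (in distinct columns), so `α(σ, H) ≤ ν σ + ρ σ + (n - s)`.
-/

lemma le_of_card_nsmul_le_sum {ι M : Type*} [Fintype ι] [AddCommMonoid M] [LinearOrder M]
    [IsOrderedCancelAddMonoid M] {f : ι → M} {r : M} (hle : ∀ i, f i ≤ r)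
    (hsum : Fintype.card ι • r ≤ ∑ i, f i) (i : ι) : r ≤ f i := by
  by_contra! hlt
  have hlt_sum : ∑ j, f j < ∑ _j : ι, r :=
    Finset.sum_lt_sum (fun j _ => hle j) ⟨i, Finset.mem_univ i, hlt⟩
  rw [Finset.sum_const, Finset.card_univ] at hlt_sum
  exact (hsum.trans_lt hlt_sum).false

section PLS

variable {n : ℕ}

lemma IndepCells.injOn_fst {S : Finset (Fin n × Fin n)} (hS : IndepCells S) :
    Set.InjOn Prod.fst (S : Set (Fin n × Fin n)) := fun c hc c' hc' h =>
  by_contra fun hne => (hS c hc c' hc' hne).1 h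

lemma IndepCells.injOn_snd {S : Finset (Fin n × Fin n)} (hS : IndepCells S) :
    Set.InjOn Prod.snd (S : Set (Fin n × Fin n)) := fun c hc c' hc' h =>
  by_contra fun hne => (hS c hc c' hc' hne).2 h

lemma alpha_le {P : Fin n → Fin n → Option (Fin n)} {σ : Fin n} {T : Finset (Fin n × Fin n)}
    {k : ℕ} (h : ∀ S ⊆ T, IndepCells S → (∀ c ∈ S, Supports P σ c) → S.card ≤ k) :
    alpha P σ T ≤ k :=
  Finset.sup_le fun S hS => by
    rw [Finset.mem_filter, Finset.mem_powerset] at hS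
    exact h S hS.1 hS.2.1 hS.2.2

lemma alpha_le_card_image_fst (P : Fin n → Fin n → Option (Fin n)) (σ : Fin n)
    (T : Finset (Fin n × Fin n)) : alpha P σ T ≤ (T.image Prod.fst).card :=
  alpha_le fun _ hST hS _ =>
    Finset.card_le_card_of_injOn Prod.fst
      (fun _ hc => Finset.mem_image_of_mem _ (hST hc)) hS.injOn_fst

lemma alpha_topRows_le (P : Fin n → Fin n → Option (Fin n)) (σ : Fin n) (r : ℕ) :
    alpha P σ (Finset.univ.filter fun c : Fin n × Fin n => c.1.val < r) ≤ r := by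
  refine (alpha_le_card_image_fst P σ _).trans ?_
  calc _ ≤ (Finset.univ.filter fun i : Fin n => i.val < r).card := by
        refine Finset.card_le_card fun i hi => ?_
        simp only [Finset.mem_image, Finset.mem_filter, Finset.mem_univ, true_and] at hi ⊢
        obtain ⟨c, hc, rfl⟩ := hi
        exact hc
    _ ≤ r := Fin.card_filter_val_lt.trans_le (min_le_right n r)

lemma card_filter_not_val_lt (s : ℕ) :
    (Finset.univ.filter fun j : Fin n => ¬ j.val < s).card = n - s := by
  have h := Finset.card_filter_add_card_filter_not
    (s := (Finset.univ : Finset (Fin n))) (p := fun j : Fin n => j.val < s)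
  rw [Fin.card_filter_val_lt, Finset.card_univ, Fintype.card_fin] at h
  omega

lemma alpha_topRows_le_occurrences_add_rows_add_cols
    (P : Fin n → Fin n → Option (Fin n)) (σ : Fin n) (r s : ℕ) :
    alpha P σ (Finset.univ.filter fun c : Fin n × Fin n => c.1.val < r) ≤
      (Finset.univ.filter fun c : Fin n × Fin n => P c.1 c.2 = some σ).card +
      (Finset.univ.filter fun i : Fin n =>
        ∃ c : Fin n × Fin n, c.1 = i ∧ c.1.val < r ∧ c.2.val < s ∧
          P c.1 c.2 = none ∧ Supports P σ c).card + (n - s) := by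
  refine alpha_le fun S hST hS hsupp => ?_
  have hsplit : S.card = (S.filter fun c => P c.1 c.2 = some σ).card +
      ((S.filter fun c => P c.1 c.2 ≠ some σ).filter fun c => c.2.val < s).card +
      ((S.filter fun c => P c.1 c.2 ≠ some σ).filter fun c => ¬ c.2.val < s).card := by
    rw [add_assoc, Finset.card_filter_add_card_filter_not, Finset.card_filter_add_card_filter_not]
  have hFilled := Finset.card_le_card <|
    Finset.filter_subset_filter (fun c : Fin n × Fin n => P c.1 c.2 = some σ) S.subset_univ
  have hEmptyLeft : ((S.filter fun c => P c.1 c.2 ≠ some σ).filter fun c => c.2.val < s).card ≤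
      (Finset.univ.filter fun i : Fin n =>
        ∃ c : Fin n × Fin n, c.1 = i ∧ c.1.val < r ∧ c.2.val < s ∧
          P c.1 c.2 = none ∧ Supports P σ c).card := by
    refine Finset.card_le_card_of_injOn Prod.fst (fun c hc => ?_)
      (hS.injOn_fst.mono fun c hc => by simp_all)
    simp only [Finset.mem_coe, Finset.mem_filter] at hc
    obtain ⟨⟨hcS, hne⟩, hcs⟩ := hc
    have hcr : c.1.val < r := by simpa using hST hcS
    have hnone : P c.1 c.2 = none := ((hsupp c hcS).resolve_left hne).1
    exact Finset.mem_filter.2 ⟨Finset.mem_univ _, c, rfl, hcr, hcs, hnone, hsupp c hcS⟩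
  have hEmptyRight :
      ((S.filter fun c => P c.1 c.2 ≠ some σ).filter fun c => ¬ c.2.val < s).card ≤ n - s := by
    rw [← card_filter_not_val_lt s]
    refine Finset.card_le_card_of_injOn Prod.snd (fun c hc => ?_)
      (hS.injOn_snd.mono fun c hc => by simp_all)
    simp only [Finset.mem_coe, Finset.mem_filter] at hc
    simpa using hc.2
  omega

end PLS

theorem stmt15_general (n r s : ℕ)
    (P : Fin n → Fin n → Option (Fin n))
    (H : Finset (Fin n × Fin n))
    (hH : H = Finset.univ.filter (fun c : Fin n × Fin n => c.1.val < r))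
    (ν ρ : Fin n → ℕ)
    (hν : ∀ σ, ν σ = (Finset.univ.filter
      (fun c : Fin n × Fin n => P c.1 c.2 = some σ)).card)
    (hρ : ∀ σ, ρ σ = (Finset.univ.filter (fun i : Fin n =>
      ∃ c : Fin n × Fin n, c.1 = i ∧ c.1.val < r ∧ c.2.val < s ∧
        P c.1 c.2 = none ∧ Supports P σ c)).card)
    (hHI : r * n ≤ ∑ σ : Fin n, alpha P σ H) :
    ∀ σ : Fin n, r ≤ ν σ + ρ σ + (n - s) := by
  intro σ
  subst hH
  have hα : r ≤ alpha P σ _ :=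
    le_of_card_nsmul_le_sum (fun τ => alpha_topRows_le P τ r)
      (by rwa [Fintype.card_fin, smul_eq_mul, mul_comm]) σ
  rw [hν, hρ]
  exact hα.trans (alpha_topRows_le_occurrences_add_rows_add_cols P σ r s)

theorem stmt15 (n r s : ℕ) (hr : 1 ≤ r) (hrn : r ≤ n) (hs : 1 ≤ s) (hsn : s ≤ n)
    (P : Fin n → Fin n → Option (Fin n)) (hP : IsPLS n P)
    (hshape1 : ∀ i j : Fin n, P i j ≠ none → i.val < r ∧ j.val < s)
    (hshape2 : ∀ j : Fin n, j.val < s →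
      (Finset.univ.filter (fun i : Fin n => i.val < r ∧ P i j = none)).card ≤ 1)
    (H : Finset (Fin n × Fin n))
    (hH : H = Finset.univ.filter (fun c : Fin n × Fin n => c.1.val < r))
    (ν ρ : Fin n → ℕ)
    (hν : ∀ σ, ν σ = (Finset.univ.filter
      (fun c : Fin n × Fin n => P c.1 c.2 = some σ)).card)
    (hρ : ∀ σ, ρ σ = (Finset.univ.filter (fun i : Fin n =>
      ∃ c : Fin n × Fin n, c.1 = i ∧ c.1.val < r ∧ c.2.val < s ∧
        P c.1 c.2 = none ∧ Supports P σ c)).card)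
    (hHI : r * n ≤ ∑ σ : Fin n, alpha P σ H) :
    ∀ σ : Fin n, r ≤ ν σ + ρ σ + (n - s) :=
  stmt15_general n r s P H hH ν ρ hν hρ hHI
end

section
/- Let G be a directed graph with integer edge capacities, a source α with zero in-degree and a sink ω with zero out-degree, and suppose every cut separating α from ω has capacity at least u. Then there exists an integral flow from α to ω of value at least u. -/
/-! Induction on `u`. If every `α`–`ω` cut has capacity at least `u + 1`, then `ω` is reachable
from `α` along edges of positive capacity, so there is a simple `α`–`ω` path `p`. A simple path
crosses every such cut once more forwards than backwards, so in the residual capacities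
`c - p + pᵀ` every cut has capacity at least `u`, and by induction they carry a flow `f` of net
value at least `u`. Cancelling opposite flows in `f + p` gives a flow within `c` of net value at
least `u + 1`; the net value bounds the outflow of `α` from below. -/

open scoped Classical

open Finset Function

theorem List.exists_nodup_isChain_cons_of_relationReflTransGen {α : Type*} {r : α → α → Prop}
    {a b : α} (h : Relation.ReflTransGen r a b) :
    ∃ l, IsChain r (a :: l) ∧ getLast (a :: l) (cons_ne_nil _ _) = b ∧ (a :: l).Nodup := by
  refine Relation.ReflTransGen.head_induction_on h ⟨[], .singleton _, rfl, nodup_singleton _⟩ ?_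
  rintro c d hcd - ⟨l, hchain, hlast, hnodup⟩
  by_cases hc : c ∈ d :: l
  · obtain ⟨s, t, hst⟩ := append_of_mem hc
    simp only [hst] at hchain hlast hnodup
    refine ⟨t, hchain.right_of_append, ?_, hnodup.sublist (sublist_append_right _ _)⟩
    rwa [getLast_append_of_ne_nil _ (cons_ne_nil _ _)] at hlast
  · exact ⟨d :: l, .cons_cons hcd hchain, by rwa [getLast_cons_cons], nodup_cons.2 ⟨hc, hnodup⟩⟩

namespace Network

variable {V : Type*}

section Flow

variable {M : Type*} [Fintype V] [AddCommMonoid M]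

def inflow (f : V → V → M) (v : V) : M := ∑ x, f x v

def outflow (f : V → V → M) (v : V) : M := ∑ y, f v y

def Conserves (f : V → V → M) (α ω : V) : Prop := ∀ v, v ≠ α → v ≠ ω → inflow f v = outflow f v

theorem inflow_add (f g : V → V → M) (v : V) : inflow (f + g) v = inflow f v + inflow g v :=
  sum_add_distrib

theorem outflow_add (f g : V → V → M) (v : V) : outflow (f + g) v = outflow f v + outflow g v :=
  sum_add_distrib

theorem Conserves.add {f g : V → V → M} {α ω : V} (hf : Conserves f α ω) (hg : Conserves g α ω) :
    Conserves (f + g) α ω := fun v hα hω => by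
  rw [inflow_add, outflow_add, hf v hα hω, hg v hα hω]

end Flow

section Cut

variable {M : Type*} [Fintype V] [DecidableEq V]

def cutValue [AddCommMonoid M] (f : V → V → M) (S : Finset V) : M := ∑ x ∈ S, ∑ y ∈ Sᶜ, f x y

theorem cutValue_add [AddCommMonoid M] (f g : V → V → M) (S : Finset V) :
    cutValue (f + g) S = cutValue f S + cutValue g S := by
  simp only [cutValue, Pi.add_apply, sum_add_distrib]

theorem sum_outflow_eq_cutValue_add [AddCommMonoid M] (f : V → V → M) (S : Finset V) :
    ∑ x ∈ S, outflow f x = cutValue f S + ∑ x ∈ S, ∑ y ∈ S, f x y := by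
  simp only [cutValue, outflow, ← sum_add_distrib, add_comm (∑ y ∈ Sᶜ, _), sum_add_sum_compl]

theorem cutValue_add_inflow [AddCancelCommMonoid M] {f : V → V → M} {α ω : V}
    (hf : Conserves f α ω) {S : Finset V} (hα : α ∈ S) (hω : ω ∉ S) :
    cutValue f S + inflow f α = cutValue (swap f) S + outflow f α := by
  have hS : ∑ x ∈ S, outflow f x + inflow f α = ∑ x ∈ S, inflow f x + outflow f α := by
    have hinner : ∑ x ∈ S.erase α, outflow f x = ∑ x ∈ S.erase α, inflow f x :=
      sum_congr rfl fun v hv =>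
        (hf v (ne_of_mem_erase hv) (ne_of_mem_of_not_mem (mem_of_mem_erase hv) hω)).symm
    rw [← add_sum_erase S _ hα, ← add_sum_erase S _ hα, hinner]
    abel
  rw [sum_outflow_eq_cutValue_add,
    show ∑ x ∈ S, inflow f x = ∑ x ∈ S, outflow (swap f) x from rfl,
    sum_outflow_eq_cutValue_add, sum_comm (f := swap f)] at hS
  simp only [swap] at hS
  rw [add_right_comm, add_right_comm (cutValue (swap f) S)] at hS
  exact add_right_cancel hS

theorem reflTransGen_of_cutValue_pos {c : V → V → ℕ} {α ω : V}
    (hcut : ∀ S : Finset V, α ∈ S → ω ∉ S → 0 < cutValue c S) :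
    Relation.ReflTransGen (fun x y => 0 < c x y) α ω := by
  by_contra hω
  let S := univ.filter (Relation.ReflTransGen (fun x y => 0 < c x y) α)
  have hS : cutValue c S = 0 := sum_eq_zero fun x hx => sum_eq_zero fun y hy => by
    by_contra hxy
    have hyS : y ∈ S := mem_filter.2 ⟨mem_univ y, (mem_filter.1 hx).2.tail (Nat.pos_of_ne_zero hxy)⟩
    exact mem_compl.1 hy hyS
  exact (hcut S (mem_filter.2 ⟨mem_univ α, .refl⟩) (by simpa [S])).ne' hS

end Cut

section Path

variable [DecidableEq V]

def pathFlow : List V → V → V → ℕ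
  | a :: b :: l, x, y => (if x = a ∧ y = b then 1 else 0) + pathFlow (b :: l) x y
  | _, _, _ => 0

theorem rel_of_pathFlow_pos {r : V → V → Prop} {l : List V} (hl : l.IsChain r) {x y : V}
    (h : 0 < pathFlow l x y) : r x y := by
  induction l using List.twoStepInduction with
  | nil | singleton => simp [pathFlow] at h
  | cons_cons a b l _ ih =>
    rw [List.isChain_cons_cons] at hl
    by_cases hxy : x = a ∧ y = b
    · exact hxy.1 ▸ hxy.2 ▸ hl.1
    · simp only [pathFlow, hxy, if_false, zero_add] at h
      exact ih b hl.2 h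

variable [Fintype V]

theorem outflow_pathFlow (l : List V) (v : V) : outflow (pathFlow l) v = l.dropLast.count v := by
  induction l using List.twoStepInduction with
  | nil | singleton => simp [outflow, pathFlow]
  | cons_cons a b l _ ih =>
    simp only [outflow] at ih ⊢
    simp only [pathFlow, sum_add_distrib, ih b, List.dropLast_cons_cons, List.count_cons]
    obtain rfl | hv := eq_or_ne v a
    · simp [add_comm]
    · simp [hv, hv.symm]

theorem inflow_pathFlow (l : List V) (v : V) : inflow (pathFlow l) v = l.tail.count v := by
  induction l using List.twoStepInduction with
  | nil | singleton => simp [inflow, pathFlow]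
  | cons_cons a b l _ ih =>
    simp only [inflow] at ih ⊢
    simp only [pathFlow, sum_add_distrib, ih b, List.tail_cons, List.count_cons]
    obtain rfl | hv := eq_or_ne v b
    · simp [add_comm]
    · simp [hv, hv.symm]

theorem exists_unit_flow_of_reflTransGen {c : V → V → ℕ} {α ω : V} (hαω : α ≠ ω)
    (h : Relation.ReflTransGen (fun x y => 0 < c x y) α ω) :
    ∃ p ≤ c, Conserves p α ω ∧ inflow p α + 1 = outflow p α := by
  obtain ⟨l, hchain, hlast, hnodup⟩ := List.exists_nodup_isChain_cons_of_relationReflTransGen h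
  have hcount : ∀ v, (α :: l).count v = (α :: l).dropLast.count v + if ω = v then 1 else 0 := by
    intro v
    conv_lhs => rw [← List.dropLast_append_getLast (List.cons_ne_nil α l), hlast]
    simp [List.count_append, List.count_singleton]
  refine ⟨pathFlow (α :: l), fun x y => ?_, fun v hvα hvω => ?_, ?_⟩
  · obtain h0 | hpos := (pathFlow (α :: l) x y).eq_zero_or_pos
    · exact h0 ▸ Nat.zero_le _
    calc pathFlow (α :: l) x y ≤ outflow (pathFlow (α :: l)) x :=
          single_le_sum (fun _ _ => Nat.zero_le _) (mem_univ y)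
      _ ≤ (α :: l).count x := by rw [outflow_pathFlow, hcount]; exact le_self_add
      _ ≤ 1 := List.nodup_iff_count_le_one.1 hnodup x
      _ ≤ c x y := rel_of_pathFlow_pos hchain hpos
  · have hv := hcount v
    rw [if_neg hvω.symm, add_zero, List.count_cons_of_ne hvα.symm] at hv
    rw [inflow_pathFlow, outflow_pathFlow, List.tail_cons, hv]
  · have hα := hcount α
    rw [if_neg hαω.symm, add_zero, List.count_cons_self] at hα
    rw [inflow_pathFlow, outflow_pathFlow, List.tail_cons, ← hα,
      List.count_eq_zero.2 (List.nodup_cons.1 hnodup).1]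

end Path

section Residual

def residual (c p : V → V → ℕ) : V → V → ℕ := c - p + swap p

theorem tsub_swap_le_of_le_residual {c p f : V → V → ℕ} (hp : p ≤ c) (hf : f ≤ residual c p) :
    f + p - swap (f + p) ≤ c := fun x y => by
  have := hp x y
  have := hf x y
  simp only [residual, Pi.add_apply, Pi.sub_apply, swap] at *
  omega

variable [Fintype V]

theorem inflow_tsub_swap_add_outflow (g : V → V → ℕ) (v : V) :
    inflow (g - swap g) v + outflow g v = outflow (g - swap g) v + inflow g v := by
  simp only [inflow, outflow, ← sum_add_distrib]
  exact sum_congr rfl fun x _ => by simp only [Pi.sub_apply, swap, tsub_add_eq_max, max_comm]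

theorem Conserves.tsub_swap {g : V → V → ℕ} {α ω : V} (hg : Conserves g α ω) :
    Conserves (g - swap g) α ω := fun v hα hω => by
  have := inflow_tsub_swap_add_outflow g v
  rw [hg v hα hω] at this
  exact Nat.add_right_cancel this

theorem cutValue_residual [DecidableEq V] {c p : V → V → ℕ} (hp : p ≤ c) (S : Finset V) :
    cutValue (residual c p) S + cutValue p S = cutValue c S + cutValue (swap p) S := by
  rw [residual, ← cutValue_add, ← cutValue_add, tsub_add_eq_add_tsub hp, tsub_add_cancel_of_le]
  exact fun x y => (hp x y).trans (Nat.le_add_right _ _)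

end Residual

theorem exists_flow_of_le_cutValue [Fintype V] [DecidableEq V] {c : V → V → ℕ} {α ω : V}
    (hαω : α ≠ ω) {u : ℕ} (hcut : ∀ S : Finset V, α ∈ S → ω ∉ S → u ≤ cutValue c S) :
    ∃ f ≤ c, Conserves f α ω ∧ u + inflow f α ≤ outflow f α := by
  induction u generalizing c with
  | zero => exact ⟨0, fun _ _ => Nat.zero_le _, fun _ _ _ => rfl, by simp [inflow, outflow]⟩
  | succ u ih =>
    obtain ⟨p, hpc, hp, hpα⟩ := exists_unit_flow_of_reflTransGen hαω <|
      reflTransGen_of_cutValue_pos fun S hα hω => u.succ_pos.trans_le (hcut S hα hω)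
    obtain ⟨f, hfc, hf, hfα⟩ := ih (c := residual c p) fun S hα hω => by
      have hres := cutValue_residual hpc S
      have hcross := cutValue_add_inflow hp hα hω
      have hcutS := hcut S hα hω
      omega
    refine ⟨f + p - swap (f + p), tsub_swap_le_of_le_residual hpc hfc, (hf.add hp).tsub_swap, ?_⟩
    have hcancel := inflow_tsub_swap_add_outflow (f + p) α
    rw [inflow_add f p α, outflow_add f p α] at hcancel
    omega

end Network

theorem stmt19_general {V : Type*} [Fintype V] [DecidableEq V]
    (c : V → V → ℕ) (α ω : V) (hαω : α ≠ ω) (u : ℕ)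
    (hcut : ∀ S : Finset V, α ∈ S → ω ∉ S → u ≤ ∑ x ∈ S, ∑ y ∈ Sᶜ, c x y) :
    ∃ f : V → V → ℕ, (∀ x y, f x y ≤ c x y) ∧
      (∀ v, v ≠ α → v ≠ ω → ∑ x, f x v = ∑ y, f v y) ∧
      u ≤ ∑ y, f α y := by
  obtain ⟨f, hfc, hf, hfα⟩ := Network.exists_flow_of_le_cutValue hαω hcut
  exact ⟨f, hfc, hf, le_of_add_le_left hfα⟩

theorem stmt19 {V : Type*} [Fintype V] [DecidableEq V]
    (c : V → V → ℕ) (α ω : V) (hαω : α ≠ ω)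
    (hin : ∀ v, c v α = 0) (hout : ∀ v, c ω v = 0) (u : ℕ)
    (hcut : ∀ S : Finset V, α ∈ S → ω ∉ S → u ≤ ∑ x ∈ S, ∑ y ∈ Sᶜ, c x y) :
    ∃ f : V → V → ℕ, (∀ x y, f x y ≤ c x y) ∧
      (∀ v, v ≠ α → v ≠ ω → ∑ x, f x v = ∑ y, f v y) ∧
      u ≤ ∑ y, f α y :=
  stmt19_general c α ω hαω u hcut
end
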